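/- arXiv:0810.2318 — 2 statements merged into one kernel-verified Lean document; each statement's English description precedes it below -/
import Mathlib

section
/- Let M be a ℤ_p-module such that both M/pM and the p-torsion M[p] are finite. Then there exist submodules M₁ ⊆ M₂ ⊆ M such that M₁ is a torsion module of finite corank (i.e. its Pontryagin dual is a finitely generated ℤ_p-module), M₂/M₁ is uniquely p-divisible, and M/M₂ is a finitely generated ℤ_p-module. -/
/-- The ℤ_p-module ℚ_p/ℤ_p. -/
abbrev QpModZp (p : ℕ) [Fact p.Prime] : Type :=
  ℚ_[p] ⧸ LinearMap.range (Algebra.linearMap ℤ_[p] ℚ_[p])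

/-!
Take `M₁ = T`, the torsion submodule, and `M₂` its `p`-adic closure `⋂ₙ (pⁿ M + T)`. Since `M ⧸ T`
is torsion-free, `p` is injective on `M₂ ⧸ T`; and if `x = p^(n+1) yₙ` modulo `T` for every `n`,
then `y₀ ≡ pⁿ yₙ` modulo `T`, so `y₀ ∈ M₂` and `x = p y₀`.

The two finiteness claims are instances of topological Nakayama over the `p`-adically complete
ring `ℤ_p`: a `p`-adically separated module that is finitely generated modulo `p` is finitely
generated. `M ⧸ M₂` is separated by construction and modulo `p` is a quotient of `M ⧸ pM`.
`Hom(T, ℚ_p/ℤ_p)` is separated because `T` is torsion, and since `ℚ_p/ℤ_p` is divisible, hence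
injective, it embeds modulo `p` into `Hom(T[p], (ℚ_p/ℤ_p)[p])`, which is finite.
-/

open Submodule nonZeroDivisors

section AdicNakayama

variable {R : Type*} [CommRing R] (I : Ideal R)

theorem Submodule.mem_smul_top_pi {ι : Type*} [Finite ι] {M : ι → Type*}
    [∀ i, AddCommGroup (M i)] [∀ i, Module R (M i)] {x : ∀ i, M i}
    (hx : ∀ i, x i ∈ I • (⊤ : Submodule R (M i))) : x ∈ I • (⊤ : Submodule R (∀ i, M i)) := by
  classical
  cases nonempty_fintype ι
  rw [← Finset.univ_sum_single x]
  exact sum_mem fun i _ => smul_top_le_comap_smul_top I (LinearMap.single R M i) (hx i)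

instance IsPrecomplete.pi {ι : Type*} [Finite ι] {M : ι → Type*}
    [∀ i, AddCommGroup (M i)] [∀ i, Module R (M i)] [∀ i, IsPrecomplete I (M i)] :
    IsPrecomplete I (∀ i, M i) := by
  refine ⟨fun f hf => ?_⟩
  have coord (n : ℕ) (i : ι) {x : ∀ i, M i} (hx : x ∈ I ^ n • (⊤ : Submodule R (∀ i, M i))) :
      x i ∈ I ^ n • (⊤ : Submodule R (M i)) :=
    smul_top_le_comap_smul_top (I ^ n) (LinearMap.proj i) hx
  choose L hL using fun i => IsPrecomplete.prec inferInstance (I := I) (f := fun n => f n i)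
    fun hmn => SModEq.sub_mem.mpr (coord _ i (SModEq.sub_mem.mp (hf hmn)))
  exact ⟨L, fun n => SModEq.sub_mem.mpr (mem_smul_top_pi _ fun i => SModEq.sub_mem.mp (hL i n))⟩

theorem Module.Finite.of_isHausdorff_of_finite_quotient [IsPrecomplete I R]
    {N : Type*} [AddCommGroup N] [Module R N] [IsHausdorff I N]
    [Module.Finite R (N ⧸ I • (⊤ : Submodule R N))] : Module.Finite R N := by
  obtain ⟨n, g, hg⟩ := Module.Finite.exists_fin' R (N ⧸ I • (⊤ : Submodule R N))
  obtain ⟨φ, rfl⟩ :=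
    Module.projective_lifting_property (I • (⊤ : Submodule R N)).mkQ g (mkQ_surjective _)
  exact .of_surjective φ (surjective_of_mkQ_comp_surjective hg)

end AdicNakayama

namespace Submodule

variable {R M : Type*} [CommRing R] [AddCommGroup M] [Module R M]

def adicClosure (N : Submodule R M) (I : Ideal R) : Submodule R M :=
  ⨅ n : ℕ, (I ^ n • ⊤ ⊔ N)

variable (N : Submodule R M) (I : Ideal R)

theorem le_adicClosure : N ≤ N.adicClosure I :=
  le_iInf fun _ => le_sup_right

theorem adicClosure_le (n : ℕ) : N.adicClosure I ≤ I ^ n • ⊤ ⊔ N :=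
  iInf_le _ n

instance isHausdorff_quotient_adicClosure : IsHausdorff I (M ⧸ N.adicClosure I) := by
  refine ⟨fun x hx => ?_⟩
  obtain ⟨m, rfl⟩ := mkQ_surjective _ x
  refine (Quotient.mk_eq_zero _).mpr (mem_iInf _ |>.mpr fun n => ?_)
  have hm : (N.adicClosure I).mkQ m ∈ I ^ n • ⊤ := SModEq.zero.mp (hx n)
  rw [← mem_comap, comap_smul_top_of_surjective _ _ (mkQ_surjective _), ker_mkQ] at hm
  exact sup_le le_sup_left (N.adicClosure_le I n) hm

theorem mem_span_singleton_pow_smul_top {a : R} {n : ℕ} {x : M} :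
    x ∈ Ideal.span {a} ^ n • (⊤ : Submodule R M) ↔ ∃ y, a ^ n • y = x := by
  simp [Ideal.span_singleton_pow, ideal_span_singleton_smul, mem_smul_pointwise_iff_exists]

theorem mem_adicClosure_span_singleton {a : R} {x : M} :
    x ∈ N.adicClosure (Ideal.span {a}) ↔ ∀ n, ∃ y, x - a ^ n • y ∈ N := by
  simp only [adicClosure, mem_iInf, mem_sup, mem_span_singleton_pow_smul_top]
  refine forall_congr' fun n => ⟨?_, ?_⟩
  · rintro ⟨_, ⟨y, rfl⟩, t, ht, rfl⟩
    exact ⟨y, by simpa using ht⟩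
  · rintro ⟨y, hy⟩
    exact ⟨_, ⟨y, rfl⟩, _, hy, add_sub_cancel _ _⟩

theorem bijective_smul_quotient_adicClosure {a : R} (hN : ∀ x, a • x ∈ N → x ∈ N) :
    Function.Bijective fun x : N.adicClosure (Ideal.span {a}) ⧸
      comap (N.adicClosure (Ideal.span {a})).subtype N => a • x := by
  set C := N.adicClosure (Ideal.span {a})
  constructor
  · intro x y hxy
    rw [← sub_eq_zero, ← smul_sub] at hxy
    rw [← sub_eq_zero]
    obtain ⟨z, hz⟩ := mkQ_surjective _ (x - y)
    rw [← hz, mkQ_apply, ← Quotient.mk_smul, Quotient.mk_eq_zero] at hxy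
    rw [← hz, mkQ_apply, Quotient.mk_eq_zero]
    exact hN _ hxy
  · intro x
    obtain ⟨w, rfl⟩ := mkQ_surjective _ x
    choose y hy using (N.mem_adicClosure_span_singleton.mp w.2 <| · + 1)
    have hy₀ : y 0 ∈ C := by
      refine N.mem_adicClosure_span_singleton.mpr fun n => ⟨y n, hN _ ?_⟩
      have : a • (y 0 - a ^ n • y n) = (w - a ^ (n + 1) • y n) - (w - a ^ (0 + 1) • y 0) := by
        rw [smul_sub, smul_smul, ← pow_succ']; simp
      exact this ▸ sub_mem (hy n) (hy 0)
    refine ⟨Quotient.mk ⟨y 0, hy₀⟩, ?_⟩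
    show a • _ = _
    rw [mkQ_apply, ← Quotient.mk_smul, Quotient.eq, mem_comap]
    simpa using neg_mem (hy 0)

end Submodule

theorem Submodule.finite_quotient_span_smul_top_quotient {R M : Type*} [CommRing R]
    [AddCommGroup M] [Module R M] (a : R) (C : Submodule R M)
    [Finite (M ⧸ LinearMap.range (a • (LinearMap.id : M →ₗ[R] M)))] :
    Finite ((M ⧸ C) ⧸ Ideal.span {a} • (⊤ : Submodule R (M ⧸ C))) := by
  have hle : LinearMap.range (a • LinearMap.id) ≤
      LinearMap.ker ((Ideal.span {a} • (⊤ : Submodule R (M ⧸ C))).mkQ ∘ₗ C.mkQ) := by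
    rintro _ ⟨x, rfl⟩
    rw [LinearMap.mem_ker, LinearMap.comp_apply, LinearMap.smul_apply, LinearMap.id_apply,
      map_smul, mkQ_apply, Quotient.mk_eq_zero]
    exact smul_mem_smul (Ideal.mem_span_singleton_self _) mem_top
  refine Finite.of_surjective (liftQ _ _ hle) ?_
  rw [← LinearMap.range_eq_top, range_liftQ, LinearMap.range_eq_top]
  exact (mkQ_surjective _).comp (mkQ_surjective _)

theorem Submodule.mem_torsion_of_smul_mem {R M : Type*} [CommRing R] [AddCommGroup M]
    [Module R M] {a : R} (ha : a ∈ R⁰) {x : M} (hx : a • x ∈ torsion R M) : x ∈ torsion R M := by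
  obtain ⟨b, hb⟩ := hx
  exact ⟨b * ⟨a, ha⟩, by rw [Submonoid.smul_def, Submonoid.coe_mul, mul_smul]; exact hb⟩

theorem Module.isTorsion'_powers_of_isTorsion {R M : Type*} [CommRing R] [IsDomain R]
    [IsDiscreteValuationRing R] [AddCommMonoid M] [Module R M] {ϖ : R} (hϖ : Irreducible ϖ)
    (hM : Module.IsTorsion R M) : Module.IsTorsion' M (Submonoid.powers ϖ) := by
  refine (isTorsion'_powers_iff ϖ).mpr fun x => ?_
  obtain ⟨a, ha⟩ := @hM x
  obtain ⟨n, u, hu⟩ :=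
    IsDiscreteValuationRing.associated_pow_irreducible (nonZeroDivisors.coe_ne_zero a) hϖ
  exact ⟨n, by rw [← hu, mul_comm, mul_smul, ← Submonoid.smul_def, ha, smul_zero]⟩

theorem Submodule.finite_torsionBy_submodule {R M : Type*} [CommRing R] [AddCommGroup M]
    [Module R M] (a : R) [Finite (torsionBy R M a)] (N : Submodule R M) :
    Finite (torsionBy R N a) :=
  Finite.of_injective
    (fun x => ⟨x.1.1, congrArg (fun y : torsionBy R N a => (y : M)) (smul_torsionBy a x)⟩ :
      torsionBy R N a → torsionBy R M a)
    fun _ _ h => by ext; exact Subtype.mk.inj h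

theorem Module.Baer.of_divisible_of_isPrincipalIdealRing {R Q : Type*} [CommRing R]
    [IsPrincipalIdealRing R] [AddCommGroup Q] [Module R Q]
    (hQ : ∀ a : R, a ≠ 0 → ∀ q : Q, ∃ q', a • q' = q) : Module.Baer R Q := fun I g ↦ by
  rcases IsPrincipalIdealRing.principal I with ⟨m, rfl⟩
  obtain rfl | hm := eq_or_ne m 0
  · refine ⟨0, fun n hn ↦ ?_⟩
    rw [Submodule.span_zero_singleton] at hn
    subst hn
    exact (map_zero g).symm
  obtain ⟨q, hq⟩ := hQ m hm (g ⟨m, Submodule.subset_span (Set.mem_singleton _)⟩)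
  refine ⟨LinearMap.toSpanSingleton R Q q, fun n hn ↦ ?_⟩
  rcases Submodule.mem_span_singleton.mp hn with ⟨c, rfl⟩
  rw [LinearMap.toSpanSingleton_apply, smul_assoc, hq, ← map_smul, SetLike.mk_smul_mk]

section LinearMapsFromTorsion

variable {R T Q : Type*} [CommRing R] [AddCommGroup T] [Module R T] [AddCommGroup Q] [Module R Q]
  (a : R)

theorem exists_eq_smul_of_torsionBy_le_ker (hQ : Module.Baer R Q) {f : T →ₗ[R] Q}
    (hf : torsionBy R T a ≤ LinearMap.ker f) : ∃ g : T →ₗ[R] Q, f = a • g := by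
  -- `f` factors through `a • T ≅ T ⧸ T[a]`; extend the factor to `T` by injectivity of `Q`.
  set μ := DistribSMul.toLinearMap R T a
  have hf' : LinearMap.ker μ ≤ LinearMap.ker f := hf
  let f' : LinearMap.range μ →ₗ[R] Q := (LinearMap.ker μ).liftQ f hf' ∘ₗ μ.quotKerEquivRange.symm
  obtain ⟨g, hg⟩ := hQ.extension_property _ (injective_subtype _) f'
  refine ⟨g, LinearMap.ext fun t => ?_⟩
  have hμt : μ.quotKerEquivRange.symm ⟨μ t, LinearMap.mem_range_self μ t⟩ =
      Submodule.Quotient.mk t :=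
    μ.quotKerEquivRange.symm_apply_eq.mpr (Subtype.ext (μ.quotKerEquivRange_apply_mk t).symm)
  have := LinearMap.congr_fun hg ⟨μ t, LinearMap.mem_range_self μ t⟩
  rw [LinearMap.comp_apply, LinearMap.comp_apply, LinearEquiv.coe_coe, hμt, liftQ_apply,
    subtype_apply] at this
  rw [← this, LinearMap.smul_apply, ← map_smul]
  rfl

theorem ker_lcomp_torsionBy_subtype (hQ : Module.Baer R Q) :
    LinearMap.ker (LinearMap.lcomp R Q (torsionBy R T a).subtype) =
      Ideal.span {a} • (⊤ : Submodule R (T →ₗ[R] Q)) := by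
  ext f
  rw [ideal_span_singleton_smul, mem_smul_pointwise_iff_exists, LinearMap.mem_ker]
  constructor
  · intro hf
    obtain ⟨g, rfl⟩ := exists_eq_smul_of_torsionBy_le_ker a hQ fun t ht =>
      LinearMap.congr_fun hf ⟨t, ht⟩
    exact ⟨g, trivial, rfl⟩
  · rintro ⟨g, -, rfl⟩
    ext ⟨t, ht⟩
    rw [LinearMap.lcomp_apply, subtype_apply, LinearMap.smul_apply, ← map_smul,
      (mem_torsionBy_iff a t).mp ht, map_zero, LinearMap.zero_apply]

theorem finite_linearMap_of_isTorsionBy {A : Type*} [AddCommMonoid A] [Module R A] [Finite A]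
    (hA : Module.IsTorsionBy R A a) [Finite (torsionBy R Q a)] : Finite (A →ₗ[R] Q) :=
  Finite.of_injective
    (fun f (x : A) => ⟨f x, by rw [mem_torsionBy_iff, ← map_smul, hA, map_zero]⟩ :
      (A →ₗ[R] Q) → A → torsionBy R Q a)
    fun _ _ h => LinearMap.ext fun x => congrArg Subtype.val (congrFun h x)

theorem finite_quotient_span_smul_top_linearMap (hQ : Module.Baer R Q)
    [Finite (torsionBy R T a)] [Finite (torsionBy R Q a)] :
    Finite ((T →ₗ[R] Q) ⧸ Ideal.span {a} • (⊤ : Submodule R (T →ₗ[R] Q))) :=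
  have := finite_linearMap_of_isTorsionBy (Q := Q) a (torsionBy_isTorsionBy (M := T) a)
  Finite.of_injective _ <| LinearMap.ker_eq_bot.mp <|
    ker_liftQ_eq_bot' _ _ (ker_lcomp_torsionBy_subtype a hQ).symm

theorem isHausdorff_linearMap_of_isTorsion' (hT : Module.IsTorsion' T (Submonoid.powers a)) :
    IsHausdorff (Ideal.span {a}) (T →ₗ[R] Q) := by
  refine ⟨fun f hf => LinearMap.ext fun t => ?_⟩
  obtain ⟨n, hn⟩ := (isTorsion'_powers_iff a).mp hT t
  obtain ⟨g, rfl⟩ := mem_span_singleton_pow_smul_top.mp (SModEq.zero.mp (hf n))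
  simp [← map_smul, hn]

end LinearMapsFromTorsion

namespace QpModZp

variable (p : ℕ) [Fact p.Prime]

theorem exists_smul_eq {a : ℤ_[p]} (ha : a ≠ 0) (q : QpModZp p) : ∃ q', a • q' = q := by
  obtain ⟨x, rfl⟩ := Submodule.Quotient.mk_surjective _ q
  refine ⟨Submodule.Quotient.mk ((a : ℚ_[p])⁻¹ * x), ?_⟩
  rw [← Submodule.Quotient.mk_smul, Algebra.smul_def, PadicInt.algebraMap_apply, ← mul_assoc,
    mul_inv_cancel₀ (PadicInt.coe_ne_zero.mpr ha), one_mul]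

theorem baer : Module.Baer ℤ_[p] (QpModZp p) :=
  .of_divisible_of_isPrincipalIdealRing fun _ ha => exists_smul_eq p ha

theorem mk_mem_torsionBy_iff (x : ℚ_[p]) :
    (Submodule.Quotient.mk x : QpModZp p) ∈ torsionBy ℤ_[p] (QpModZp p) p ↔
      ∃ z : ℤ_[p], (z : ℚ_[p]) = p * x := by
  rw [mem_torsionBy_iff, ← Submodule.Quotient.mk_smul, Submodule.Quotient.mk_eq_zero]
  simp [Algebra.smul_def]

instance finite_torsionBy : Finite (torsionBy ℤ_[p] (QpModZp p) p) := by
  -- `(ℚ_p/ℤ_p)[p]` is generated by the class of `1/p`, so it is a quotient of `ℤ_p ⧸ p ≅ 𝔽_p`.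
  have hp : (p : ℚ_[p]) ≠ 0 := by exact_mod_cast (Fact.out : p.Prime).ne_zero
  let q₀ : torsionBy ℤ_[p] (QpModZp p) p :=
    ⟨Submodule.Quotient.mk (p : ℚ_[p])⁻¹, (mk_mem_torsionBy_iff p _).mpr ⟨1, by field_simp; simp⟩⟩
  have hker : Ideal.span {(p : ℤ_[p])} ≤ LinearMap.ker (LinearMap.toSpanSingleton ℤ_[p] _ q₀) := by
    rw [Ideal.span_le, Set.singleton_subset_iff, SetLike.mem_coe, LinearMap.mem_ker,
      LinearMap.toSpanSingleton_apply, smul_torsionBy]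
  have : Finite (ℤ_[p] ⧸ Ideal.span {(p : ℤ_[p])}) :=
    PadicInt.maximalIdeal_eq_span_p (p := p) ▸ Finite.of_equiv _ PadicInt.residueField.symm.toEquiv
  refine Finite.of_surjective ((Ideal.span {(p : ℤ_[p])}).liftQ _ hker) fun ⟨q, hq⟩ => ?_
  obtain ⟨x, rfl⟩ := Submodule.Quotient.mk_surjective _ q
  obtain ⟨z, hz⟩ := (mk_mem_torsionBy_iff p x).mp hq
  refine ⟨Submodule.Quotient.mk z, Subtype.ext ?_⟩
  rw [liftQ_apply, LinearMap.toSpanSingleton_apply, Submodule.coe_smul,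
    ← Submodule.Quotient.mk_smul, Algebra.smul_def, PadicInt.algebraMap_apply, hz, mul_comm,
    ← mul_assoc, inv_mul_cancel₀ hp, one_mul]

end QpModZp

instance PadicInt.isPrecomplete_span_p (p : ℕ) [Fact p.Prime] :
    IsPrecomplete (Ideal.span {(p : ℤ_[p])}) ℤ_[p] :=
  PadicInt.maximalIdeal_eq_span_p (p := p) ▸ inferInstance

/-- If M is a ℤ_p-module with M/pM and M[p] finite, then there are submodules
M₁ ⊆ M₂ ⊆ M with M₁ torsion of finite corank (its Pontryagin dual is a finitely generated
ℤ_p-module), M₂/M₁ uniquely p-divisible, and M/M₂ a finitely generated ℤ_p-module. -/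
theorem stmt_9 (p : ℕ) [Fact p.Prime]
    (M : Type) [AddCommGroup M] [Module ℤ_[p] M]
    (hquot : Finite (M ⧸ LinearMap.range ((p : ℤ_[p]) • (LinearMap.id : M →ₗ[ℤ_[p]] M))))
    (hker : Finite (Submodule.torsionBy ℤ_[p] M (p : ℤ_[p]))) :
    ∃ M₁ M₂ : Submodule ℤ_[p] M, M₁ ≤ M₂ ∧
      Module.IsTorsion ℤ_[p] M₁ ∧
      Module.Finite ℤ_[p] (M₁ →ₗ[ℤ_[p]] QpModZp p) ∧
      Function.Bijective
        (fun x : M₂ ⧸ Submodule.comap M₂.subtype M₁ => (p : ℤ_[p]) • x) ∧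
      Module.Finite ℤ_[p] (M ⧸ M₂) := by
  set I := Ideal.span {(p : ℤ_[p])}
  set T := torsion ℤ_[p] M
  set C := T.adicClosure I
  have hp : (p : ℤ_[p]) ∈ nonZeroDivisors ℤ_[p] :=
    mem_nonZeroDivisors_of_ne_zero (PadicInt.irreducible_p (p := p)).ne_zero
  refine ⟨T, C, T.le_adicClosure I, torsion_isTorsion, ?_,
    T.bijective_smul_quotient_adicClosure fun _ => mem_torsion_of_smul_mem hp, ?_⟩
  · have := isHausdorff_linearMap_of_isTorsion' (T := T) (Q := QpModZp p) _
      (Module.isTorsion'_powers_of_isTorsion (PadicInt.irreducible_p (p := p)) torsion_isTorsion)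
    have := finite_torsionBy_submodule (p : ℤ_[p]) T
    have := finite_quotient_span_smul_top_linearMap (T := T) (p : ℤ_[p]) (QpModZp.baer p)
    exact Module.Finite.of_isHausdorff_of_finite_quotient I
  · have := finite_quotient_span_smul_top_quotient (p : ℤ_[p]) C
    exact Module.Finite.of_isHausdorff_of_finite_quotient I
end

section
/- Let (A_n), (B_n), (C_n) be direct systems of ℤ_p-modules indexed by ℕ with a short exact sequence of systems 0 → A → B → C → 0, and suppose each B_n is a finitely generated ℤ_p-module. Then the system (B_n) stabilizes (all transition maps are isomorphisms from some index on) if and only if both (A_n) and (C_n) stabilize. -/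
/-!
Once the transitions of `B` are bijective from `n₀` on, pulling the images of the `A n` back to
`B n₀` along them gives an ascending chain of submodules of the noetherian module `B n₀`; its
stabilization says that the transitions of `A` are eventually surjective. The four and five
lemmas, applied to the ladder between levels `n` and `n + 1`, then make the transitions of `C`
and of `A` bijective. Conversely, the short five lemma makes `B` stabilize once `A` and `C` do.
-/

section DirectSystem

variable {R : Type*} [Semiring R] {M : ℕ → Type*} [∀ n, AddCommMonoid (M n)]
  [∀ n, Module R (M n)]

def iterTransition (f : ∀ n, M n →ₗ[R] M (n + 1)) (n₀ : ℕ) : ∀ k, M n₀ →ₗ[R] M (n₀ + k)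
  | 0 => LinearMap.id
  | k + 1 => (f (n₀ + k)).comp (iterTransition f n₀ k)

theorem surjective_iterTransition {f : ∀ n, M n →ₗ[R] M (n + 1)} {n₀ : ℕ}
    (hf : ∀ n ≥ n₀, Function.Surjective (f n)) (k : ℕ) :
    Function.Surjective (iterTransition f n₀ k) := by
  induction k with
  | zero => exact Function.surjective_id
  | succ k ih => exact (hf (n₀ + k) (Nat.le_add_right _ _)).comp ih

theorem exists_map_eq_of_isNoetherian {f : ∀ n, M n →ₗ[R] M (n + 1)} {n₀ : ℕ}
    [IsNoetherian R (M n₀)] (hf : ∀ n ≥ n₀, Function.Surjective (f n))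
    (N : ∀ n, Submodule R (M n)) (hN : ∀ n, (N n).map (f n) ≤ N (n + 1)) :
    ∃ n₁, ∀ n ≥ n₁, (N n).map (f n) = N (n + 1) := by
  let S : ℕ →o Submodule R (M n₀) :=
    ⟨fun k => (N (n₀ + k)).comap (iterTransition f n₀ k), monotone_nat_of_le_succ fun k x hx =>
      hN (n₀ + k) (Submodule.mem_map_of_mem hx)⟩
  obtain ⟨k₁, hk₁⟩ := monotone_stabilizes_iff_noetherian.mpr inferInstance S
  refine ⟨n₀ + k₁, fun n hn => le_antisymm (hN n) fun y hy => ?_⟩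
  obtain ⟨k, rfl⟩ : ∃ k, n = n₀ + k := ⟨n - n₀, by omega⟩
  obtain ⟨x, rfl⟩ := surjective_iterTransition hf (k + 1) y
  have hx : x ∈ S k := by
    rw [← hk₁ k (by omega), hk₁ (k + 1) (by omega)]
    exact hy
  exact Submodule.mem_map_of_mem hx

end DirectSystem

theorem exists_surjective_of_injective_of_isNoetherian {R : Type*} [Ring R]
    {A B : ℕ → Type*} [∀ n, AddCommGroup (A n)] [∀ n, Module R (A n)]
    [∀ n, AddCommGroup (B n)] [∀ n, Module R (B n)]
    {fA : ∀ n, A n →ₗ[R] A (n + 1)} {fB : ∀ n, B n →ₗ[R] B (n + 1)} {ι : ∀ n, A n →ₗ[R] B n}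
    (hcomm : ∀ n, (ι (n + 1)).comp (fA n) = (fB n).comp (ι n))
    (hinj : ∀ n, Function.Injective (ι n)) {n₀ : ℕ} [IsNoetherian R (B n₀)]
    (hB : ∀ n ≥ n₀, Function.Surjective (fB n)) :
    ∃ n₁, ∀ n ≥ n₁, Function.Surjective (fA n) := by
  have hmap : ∀ n,
      (LinearMap.range (ι n)).map (fB n) = LinearMap.range ((ι (n + 1)).comp (fA n)) :=
    fun n => by rw [hcomm, LinearMap.range_comp]
  obtain ⟨n₁, hn₁⟩ := exists_map_eq_of_isNoetherian hB (fun n => LinearMap.range (ι n))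
    fun n => (hmap n).trans_le (LinearMap.range_comp_le_range _ _)
  refine ⟨n₁, fun n hn a => ?_⟩
  obtain ⟨a', ha'⟩ : ι (n + 1) a ∈ LinearMap.range ((ι (n + 1)).comp (fA n)) := by
    rw [← hmap, hn₁ n hn]
    exact LinearMap.mem_range_self _ a
  exact ⟨a', hinj (n + 1) ha'⟩

section ShortFiveLemma

variable {R : Type*} [CommRing R] {A₁ B₁ C₁ A₂ B₂ C₂ : Type*}
  [AddCommGroup A₁] [Module R A₁] [AddCommGroup B₁] [Module R B₁]
  [AddCommGroup C₁] [Module R C₁] [AddCommGroup A₂] [Module R A₂]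
  [AddCommGroup B₂] [Module R B₂] [AddCommGroup C₂] [Module R C₂]

theorem LinearMap.bijective_of_bijective_of_bijective_of_shortExact
    {f₁ : A₁ →ₗ[R] B₁} {g₁ : B₁ →ₗ[R] C₁} {f₂ : A₂ →ₗ[R] B₂} {g₂ : B₂ →ₗ[R] C₂}
    {α : A₁ →ₗ[R] A₂} {β : B₁ →ₗ[R] B₂} {γ : C₁ →ₗ[R] C₂}
    (hα : f₂.comp α = β.comp f₁) (hγ : g₂.comp β = γ.comp g₁)
    (h₁ : Function.Exact f₁ g₁) (h₂ : Function.Exact f₂ g₂)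
    (hf₁ : Function.Injective f₁) (hf₂ : Function.Injective f₂)
    (hg₁ : Function.Surjective g₁) (hg₂ : Function.Surjective g₂)
    (hαbij : Function.Bijective α) (hγbij : Function.Bijective γ) : Function.Bijective β :=
  bijective_of_surjective_of_bijective_of_bijective_of_injective (0 : PUnit →ₗ[R] A₁) f₁ g₁
    (0 : C₁ →ₗ[R] PUnit) (0 : PUnit →ₗ[R] A₂) f₂ g₂ (0 : C₂ →ₗ[R] PUnit) 0 α β γ 0
    (by simp) hα hγ (by simp)
    ((exact_zero_iff_injective _ _).mpr hf₁) h₁ ((exact_zero_iff_surjective _ _).mpr hg₁)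
    ((exact_zero_iff_injective _ _).mpr hf₂) h₂ ((exact_zero_iff_surjective _ _).mpr hg₂)
    (fun _ => ⟨0, Subsingleton.elim _ _⟩) hαbij hγbij fun _ _ _ => Subsingleton.elim _ _

end ShortFiveLemma

/-- Given a levelwise short exact sequence 0 → A → B → C → 0 of direct
systems of ℤ_p-modules indexed by ℕ (with transition maps fA, fB, fC), with each B n
finitely generated over ℤ_p, the system B stabilizes iff both A and C stabilize. -/
theorem stmt_15 (p : ℕ) [Fact p.Prime]
    (A B C : ℕ → Type)
    [∀ n, AddCommGroup (A n)] [∀ n, Module ℤ_[p] (A n)]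
    [∀ n, AddCommGroup (B n)] [∀ n, Module ℤ_[p] (B n)]
    [∀ n, AddCommGroup (C n)] [∀ n, Module ℤ_[p] (C n)]
    [∀ n, Module.Finite ℤ_[p] (B n)]
    (fA : ∀ n, A n →ₗ[ℤ_[p]] A (n + 1))
    (fB : ∀ n, B n →ₗ[ℤ_[p]] B (n + 1))
    (fC : ∀ n, C n →ₗ[ℤ_[p]] C (n + 1))
    (ι : ∀ n, A n →ₗ[ℤ_[p]] B n) (π : ∀ n, B n →ₗ[ℤ_[p]] C n)
    (hcommι : ∀ n, (ι (n + 1)).comp (fA n) = (fB n).comp (ι n))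
    (hcommπ : ∀ n, (π (n + 1)).comp (fB n) = (fC n).comp (π n))
    (hinj : ∀ n, Function.Injective (ι n))
    (hexact : ∀ n, LinearMap.range (ι n) = LinearMap.ker (π n))
    (hsurj : ∀ n, Function.Surjective (π n)) :
    (∃ n₀, ∀ n ≥ n₀, Function.Bijective (fB n)) ↔
      ((∃ n₀, ∀ n ≥ n₀, Function.Bijective (fA n)) ∧
        (∃ n₀, ∀ n ≥ n₀, Function.Bijective (fC n))) := by
  have hex : ∀ n, Function.Exact (ι n) (π n) := fun n => LinearMap.exact_iff.mpr (hexact n).symm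
  constructor
  · rintro ⟨n₀, hB⟩
    obtain ⟨n₁, hA⟩ := exists_surjective_of_injective_of_isNoetherian hcommι hinj
      fun n hn => (hB n hn).2
    have hC : ∀ n ≥ max n₀ n₁, Function.Bijective (fC n) := fun n hn =>
      LinearMap.bijective_of_surjective_of_bijective_of_right_exact _ _ _ _ _ _ _
        (hcommι n) (hcommπ n) (hex n) (hex (n + 1)) (hA n (le_of_max_le_right hn))
        (hB n (le_of_max_le_left hn)) (hsurj n) (hsurj (n + 1))
    refine ⟨⟨max n₀ n₁, fun n hn => ?_⟩, ⟨max n₀ n₁, hC⟩⟩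
    exact LinearMap.bijective_of_bijective_of_injective_of_left_exact _ _ _ _ _ _ _
      (hcommι n) (hcommπ n) (hex n) (hex (n + 1)) (hB n (le_of_max_le_left hn)) (hC n hn).1
      (hinj n) (hinj (n + 1))
  · rintro ⟨⟨na, hA⟩, ⟨nc, hC⟩⟩
    exact ⟨max na nc, fun n hn => LinearMap.bijective_of_bijective_of_bijective_of_shortExact
      (hcommι n) (hcommπ n) (hex n) (hex (n + 1)) (hinj n) (hinj (n + 1)) (hsurj n)
      (hsurj (n + 1)) (hA n (le_of_max_le_left hn)) (hC n (le_of_max_le_right hn))⟩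
end
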